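/- arXiv:2007.15369 — 2 statements merged into one kernel-verified Lean document; each statement's English description precedes it below -/
import Mathlib

section
/- Let k be a conditionally negative kernel on a set X (k symmetric, k(x,x)=0, and ∑_{x,y∈F} c_x c_y k(x,y) ≤ 0 for every finite F ⊆ X and reals (c_x) with ∑ c_x = 0). Then for every t ≥ 0 the kernel q_t(x,y) = exp(-t·k(x,y)) is positive definite, i.e. for every finite F ⊆ X and complex numbers (c_x), ∑_{x,y∈F} c_x·conj(c_y)·exp(-t·k(x,y)) ≥ 0. -/
/-!
Fix `x₀ ∈ F`. Testing conditional negativity of `k` against `c - (∑ c) δ_{x₀}`, whose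
coefficients sum to zero, shows that `p(x, y) = k(x, x₀) + k(y, x₀) - k(x, y)` is positive
semidefinite on `F`. By the Schur product theorem every entrywise power of `t p` is positive
semidefinite, hence so is its entrywise exponential, and
`exp (-t k(x, y)) = d(x) exp (t p(x, y)) d(y)` with `d(x) = exp (-t k(x, x₀))` is a diagonal
congruence of it. Finally, a real positive semidefinite matrix stays positive semidefinite over `ℂ`.
-/

open Matrix
open scoped ComplexOrder

namespace Matrix

variable {ι 𝕜 : Type*} [Fintype ι] [RCLike 𝕜]

theorem PosSemidef.map_pow {A : Matrix ι ι 𝕜} (hA : A.PosSemidef) (n : ℕ) :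
    (A.map (· ^ n)).PosSemidef := by
  induction n with
  | zero =>
    convert posSemidef_vecMulVec_self_star (1 : ι → 𝕜)
    ext; simp [vecMulVec]
  | succ n ih =>
    convert ih.hadamard hA using 1
    ext; simp only [map_apply, hadamard_apply, pow_succ]

theorem PosSemidef.map_ofReal {A : Matrix ι ι ℝ} (hA : A.PosSemidef) :
    (A.map ((↑) : ℝ → 𝕜)).PosSemidef := by
  classical
  obtain ⟨B, rfl⟩ := by
    open scoped MatrixOrder in exact CStarAlgebra.nonneg_iff_eq_star_mul_self.mp hA.nonneg
  rw [star_eq_conjTranspose, Matrix.map_mul (f := algebraMap ℝ 𝕜),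
    conjTranspose_map _ fun x => (RCLike.conj_ofReal x).symm]
  exact posSemidef_conjTranspose_mul_self _

theorem PosSemidef.map_exp {A : Matrix ι ι ℝ} (hA : A.PosSemidef) :
    (A.map Real.exp).PosSemidef := by
  refine .of_dotProduct_mulVec_nonneg (hA.isHermitian.map _ fun _ => rfl) fun v => ?_
  have hsum : HasSum (fun n => (n.factorial : ℝ)⁻¹ * (star v ⬝ᵥ (A.map (· ^ n) *ᵥ v)))
      (star v ⬝ᵥ (A.map Real.exp *ᵥ v)) := by
    have hentry (i j : ι) : HasSum (fun n => (n.factorial : ℝ)⁻¹ * (v i * (A i j ^ n * v j)))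
        (v i * (Real.exp (A i j) * v j)) := by
      rw [Real.exp_eq_exp_ℝ]
      refine (((NormedSpace.expSeries_div_hasSum_exp (A i j)).mul_right (v j)).mul_left
        (v i)).congr_fun fun n => ?_
      ring
    have := hasSum_sum (s := .univ) fun i _ => hasSum_sum (s := .univ) fun j _ => hentry i j
    simpa only [dotProduct, mulVec, star_trivial, map_apply, Finset.mul_sum] using this
  exact hsum.nonneg fun n => mul_nonneg (by positivity) ((hA.map_pow n).dotProduct_mulVec_nonneg v)

structure IsConditionallyNegative (A : Matrix ι ι ℝ) : Prop where
  isSymm : A.IsSymm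
  diag_eq_zero : ∀ i, A i i = 0
  dotProduct_mulVec_nonpos : ∀ c : ι → ℝ, ∑ i, c i = 0 → c ⬝ᵥ (A *ᵥ c) ≤ 0

/-- The matrix here is twice the Gromov product based at `i₀`. -/
theorem IsConditionallyNegative.posSemidef_gromov {A : Matrix ι ι ℝ}
    (hA : A.IsConditionallyNegative) (i₀ : ι) :
    (of fun i j => A i i₀ + A j i₀ - A i j).PosSemidef := by
  classical
  refine .of_dotProduct_mulVec_nonneg ?_ fun c => ?_
  · ext i j
    simp only [conjTranspose_apply, of_apply, hA.isSymm.apply i j, star_trivial]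
    ring
  set a := A.col i₀
  set S := ∑ i, c i
  have hPc : (of fun i j => A i i₀ + A j i₀ - A i j) *ᵥ c = S • a + (a ⬝ᵥ c) • 1 - A *ᵥ c := by
    ext i
    simp only [mulVec, dotProduct, of_apply, Pi.sub_apply, Pi.add_apply, Pi.smul_apply,
      smul_eq_mul, Pi.one_apply, col_apply, S, a, Finset.sum_mul,
      ← Finset.sum_add_distrib, ← Finset.sum_sub_distrib]
    exact Finset.sum_congr rfl fun j _ => by ring
  have hAc : (A *ᵥ c) i₀ = a ⬝ᵥ c := by
    simp only [mulVec, dotProduct, col_apply, hA.isSymm.apply, a]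
  set c' : ι → ℝ := c - S • Pi.single i₀ 1
  have hc' : ∑ i, c' i = 0 := by
    simp [Finset.sum_sub_distrib, ← Finset.mul_sum, c', S]
  have key : star c ⬝ᵥ ((of fun i j => A i i₀ + A j i₀ - A i j) *ᵥ c) = -(c' ⬝ᵥ (A *ᵥ c')) := by
    simp only [star_trivial, hPc, c', mulVec_sub, mulVec_smul, mulVec_single_one,
      add_dotProduct, sub_dotProduct, dotProduct_sub, smul_dotProduct, dotProduct_smul,
      single_dotProduct, smul_eq_mul, one_dotProduct, dotProduct_comm c, hAc, col_apply,
      hA.diag_eq_zero, S, a]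
    ring
  rw [key]
  exact neg_nonneg.mpr (hA.dotProduct_mulVec_nonpos c' hc')

theorem IsConditionallyNegative.posSemidef_map_exp_neg_mul {A : Matrix ι ι ℝ}
    (hA : A.IsConditionallyNegative) {t : ℝ} (ht : 0 ≤ t) :
    (A.map fun a => Real.exp (-(t * a))).PosSemidef := by
  classical
  rcases isEmpty_or_nonempty ι with _ | ⟨⟨i₀⟩⟩
  · rw [Subsingleton.elim (A.map _) 0]
    exact .zero
  have h := ((hA.posSemidef_gromov i₀).smul ht).map_exp.mul_mul_conjTranspose_same
    (diagonal fun i => Real.exp (-(t * A i i₀)))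
  convert h using 1
  ext i j
  simp only [map_apply, smul_of, conjTranspose_eq_transpose_of_trivial, diagonal_transpose,
    mul_diagonal, diagonal_mul, of_apply, Pi.smul_apply, smul_eq_mul, ← Real.exp_add]
  congr 1
  ring

theorem isConditionallyNegative_of_finset {X : Type*} {k : X → X → ℝ}
    (hsymm : ∀ x y, k x y = k y x) (hdiag : ∀ x, k x x = 0)
    (hcn : ∀ (F : Finset X) (c : X → ℝ), (∑ x ∈ F, c x) = 0 →
      (∑ x ∈ F, ∑ y ∈ F, c x * c y * k x y) ≤ 0) (F : Finset X) :
    (of fun x y : F => k x y).IsConditionallyNegative where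
  isSymm := by ext x y; exact hsymm y x
  diag_eq_zero x := hdiag x
  dotProduct_mulVec_nonpos c hc := by
    classical
    set c' : X → ℝ := fun x => if h : x ∈ F then c ⟨x, h⟩ else 0
    have hc' (x : F) : c' x = c x := dif_pos x.2
    have := hcn F c' (by simpa [← Finset.sum_coe_sort F, hc'] using hc)
    simp_rw [← Finset.sum_coe_sort F, hc'] at this
    convert this using 1
    simp only [dotProduct, mulVec, of_apply, Finset.mul_sum]
    exact Finset.sum_congr rfl fun _ _ => Finset.sum_congr rfl fun _ _ => by ring

end Matrix

open ComplexOrder in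
theorem schoenberg_positive_definite {X : Type*} (k : X → X → ℝ)
    (hsymm : ∀ x y, k x y = k y x) (hdiag : ∀ x, k x x = 0)
    (hcn : ∀ (F : Finset X) (c : X → ℝ), (∑ x ∈ F, c x) = 0 →
      (∑ x ∈ F, ∑ y ∈ F, c x * c y * k x y) ≤ 0)
    (t : ℝ) (ht : 0 ≤ t) (F : Finset X) (c : X → ℂ) :
    0 ≤ ∑ x ∈ F, ∑ y ∈ F, c x * (starRingEnd ℂ) (c y) * Complex.exp (-(t * k x y)) := by
  have hQ := ((isConditionallyNegative_of_finset hsymm hdiag hcn F).posSemidef_map_exp_neg_mul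
    ht).map_ofReal (𝕜 := ℂ) |>.dotProduct_mulVec_nonneg fun x => star (c x)
  convert hQ using 1
  simp_rw [← Finset.sum_coe_sort F]
  simp only [dotProduct, mulVec, Pi.star_apply, Complex.star_def, Complex.conj_conj, map_apply,
    of_apply, Complex.coe_algebraMap, Complex.ofReal_exp, Complex.ofReal_neg, Complex.ofReal_mul,
    Finset.mul_sum]
  exact Finset.sum_congr rfl fun _ _ => Finset.sum_congr rfl fun _ _ => by ring
end

section
/- Let (Z, dist, μ) with μ a probability measure and δ > 0 such that c·e^{-δu} ≤ μ(B(ξ,e^{-u})) ≤ C·e^{-δu} for all ξ in the support of μ and u ≥ u₀ (two-sided Ahlfors bound). Then for 1/2 < s ≤ 1 there are constants 0 < c' ≤ C' depending only on c, C, δ, s, u₀ such that c'/(2s-1) ≤ ∫_Z dist(ξ,η)^{-2(1-s)δ} dμ(η) ≤ C'/(2s-1) for all ξ in the support of μ. -/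
/-!
Near a point `ξ` of `S`, `μ(B(ξ, r)) ≍ r^δ` for small `r`. The lower bound on the integral of
`dist(ξ, ·)^(-α)`, `α = 2(1-s)δ`, only needs the mass of one ball, on which the integrand is at
least `r^(-α)` (atoms are excluded by the upper bound). For the upper bound, the layer cake
formula writes the integral as `∫₀^∞ μ(dist(ξ, ·)^(-α) > t) dt`; the superlevel set at
height `t` is the ball of radius `t^(-1/α)`, of measure `≤ C t^(-δ/α)`, which is integrable
at infinity because `α < δ`, i.e. `s > 1/2`.
-/

open MeasureTheory Metric Set Filter Topology Real

namespace Ahlfors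

variable {Z : Type*} [MetricSpace Z] {ξ : Z}

theorem setOf_lt_dist_rpow_neg_subset {α t : ℝ} (hα : 0 < α) (ht : 0 < t) :
    {η | t < dist ξ η ^ (-α)} ⊆ closedBall ξ (t ^ (-α)⁻¹) := by
  intro η hη
  have hpos : 0 < dist ξ η := by
    refine dist_nonneg.lt_of_ne fun h ↦ ?_
    simp only [mem_ofPred_eq, ← h, zero_rpow (neg_ne_zero.2 hα.ne')] at hη
    exact ht.not_gt hη
  rw [mem_closedBall, dist_comm]
  exact ((lt_rpow_inv_iff_of_neg hpos ht (neg_neg_of_pos hα)).2 hη).le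

variable [MeasurableSpace Z] {μ : Measure Z}

theorem measure_closedBall_le_rpow_of_exp {δ C u₀ : ℝ}
    (h : ∀ u : ℝ, u₀ ≤ u →
      μ (closedBall ξ (exp (-u))) ≤ ENNReal.ofReal (C * exp (-δ * u)))
    (r : ℝ) (hr : 0 < r) (hrR : r ≤ exp (-u₀)) :
    μ (closedBall ξ r) ≤ ENNReal.ofReal (C * r ^ δ) := by
  have hu : u₀ ≤ -log r := by
    rw [le_neg, ← exp_le_exp, exp_log hr]
    exact hrR
  convert h (-log r) hu using 3
  · rw [neg_neg, exp_log hr]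
  · rw [rpow_def_of_pos hr]
    ring_nf

theorem measure_singleton_eq_zero_of_measure_closedBall_le {δ C R : ℝ} (hδ : 0 < δ)
    (hR : 0 < R)
    (hball : ∀ r, 0 < r → r ≤ R → μ (closedBall ξ r) ≤ ENNReal.ofReal (C * r ^ δ)) :
    μ {ξ} = 0 := by
  have hlim : Tendsto (fun r : ℝ ↦ ENNReal.ofReal (C * r ^ δ)) (𝓝[>] 0) (𝓝 0) := by
    have hcont : ContinuousAt (fun r : ℝ ↦ ENNReal.ofReal (C * r ^ δ)) 0 :=
      ENNReal.continuous_ofReal.continuousAt.comp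
        (continuousAt_const.mul (continuous_rpow_const hδ.le).continuousAt)
    simpa [zero_rpow hδ.ne'] using hcont.tendsto.mono_left nhdsWithin_le_nhds
  refine le_antisymm (ge_of_tendsto hlim ?_) zero_le
  filter_upwards [Ioc_mem_nhdsGT hR] with r hr
  exact (measure_mono (singleton_subset_iff.2 (mem_closedBall_self hr.1.le))).trans
    (hball r hr.1 hr.2)

variable [BorelSpace Z]

theorem ofReal_rpow_neg_mul_measure_closedBall_le_lintegral {α r : ℝ} (hα : 0 ≤ α)
    (hξ : μ {ξ} = 0) :
    ENNReal.ofReal (r ^ (-α)) * μ (closedBall ξ r)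
      ≤ ∫⁻ η, ENNReal.ofReal (dist ξ η ^ (-α)) ∂μ := by
  rw [← measure_sdiff_null hξ, ← setLIntegral_const]
  refine (setLIntegral_mono' (measurableSet_closedBall.diff (measurableSet_singleton ξ))
    fun η hη ↦ ?_).trans (setLIntegral_le_lintegral _ _)
  have hpos : 0 < dist ξ η := dist_pos.2 (Ne.symm hη.2)
  exact ENNReal.ofReal_le_ofReal <|
    rpow_le_rpow_of_nonpos hpos (dist_comm ξ η ▸ hη.1) (neg_nonpos.2 hα)

variable [IsProbabilityMeasure μ]

theorem lintegral_dist_rpow_neg_le {α δ C R : ℝ} (hα : 0 < α) (hαδ : α < δ) (hR : 0 < R)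
    (hC : 0 ≤ C)
    (hball : ∀ r, 0 < r → r ≤ R → μ (closedBall ξ r) ≤ ENNReal.ofReal (C * r ^ δ)) :
    ∫⁻ η, ENNReal.ofReal (dist ξ η ^ (-α)) ∂μ
      ≤ ENNReal.ofReal (R ^ (-α) + C * ∫ t in Ioi (R ^ (-α)), t ^ (-(δ / α))) := by
  set T := R ^ (-α)
  have hT : 0 < T := rpow_pos_of_pos hR _
  have hf : Measurable fun η ↦ dist ξ η ^ (-α) :=
    (continuous_const.dist continuous_id).measurable.pow_const _
  rw [lintegral_eq_lintegral_meas_lt μ (ae_of_all _ fun η ↦ rpow_nonneg dist_nonneg _)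
    hf.aemeasurable, ← Ioc_union_Ioi_eq_Ioi hT.le,
    lintegral_union measurableSet_Ioi (Ioc_disjoint_Ioi le_rfl)]
  have hhead : ∫⁻ t in Ioc 0 T, μ {η | t < dist ξ η ^ (-α)} ≤ ENNReal.ofReal T := by
    calc ∫⁻ t in Ioc 0 T, μ {η | t < dist ξ η ^ (-α)} ≤ ∫⁻ _ in Ioc 0 T, 1 :=
          lintegral_mono fun _ ↦ prob_le_one
      _ = ENNReal.ofReal T := by simp
  have htail_le : ∀ t ∈ Ioi T, μ {η | t < dist ξ η ^ (-α)}
      ≤ ENNReal.ofReal (C * t ^ (-(δ / α))) := by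
    intro t (ht : T < t)
    have ht0 : 0 < t := hT.trans ht
    have hz : -α < 0 := neg_neg_of_pos hα
    have hrR : t ^ (-α)⁻¹ ≤ R := (rpow_inv_le_iff_of_neg ht0 hR hz).2 ht.le
    calc μ {η | t < dist ξ η ^ (-α)} ≤ μ (closedBall ξ (t ^ (-α)⁻¹)) :=
          measure_mono (setOf_lt_dist_rpow_neg_subset hα ht0)
      _ ≤ ENNReal.ofReal (C * (t ^ (-α)⁻¹) ^ δ) := hball _ (rpow_pos_of_pos ht0 _) hrR
      _ = ENNReal.ofReal (C * t ^ (-(δ / α))) := by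
          rw [← rpow_mul ht0.le, inv_neg, neg_mul, inv_mul_eq_div]
  have hint : IntegrableOn (fun t ↦ C * t ^ (-(δ / α))) (Ioi T) :=
    (integrableOn_Ioi_rpow_of_lt (by rwa [neg_lt_neg_iff, one_lt_div hα]) hT).const_mul C
  have htail : ∫⁻ t in Ioi T, μ {η | t < dist ξ η ^ (-α)}
      ≤ ENNReal.ofReal (C * ∫ t in Ioi T, t ^ (-(δ / α))) := by
    calc ∫⁻ t in Ioi T, μ {η | t < dist ξ η ^ (-α)}
        ≤ ∫⁻ t in Ioi T, ENNReal.ofReal (C * t ^ (-(δ / α))) :=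
          setLIntegral_mono' measurableSet_Ioi htail_le
      _ = ENNReal.ofReal (C * ∫ t in Ioi T, t ^ (-(δ / α))) := by
          rw [← integral_const_mul, ofReal_integral_eq_lintegral_ofReal hint
            (ae_restrict_of_forall_mem measurableSet_Ioi fun t (ht : T < t) ↦
              mul_nonneg hC (rpow_nonneg (hT.trans ht).le _))]
  have hI : 0 ≤ C * ∫ t in Ioi T, t ^ (-(δ / α)) :=
    mul_nonneg hC (setIntegral_nonneg measurableSet_Ioi fun t (ht : T < t) ↦
      rpow_nonneg (hT.trans ht).le _)
  rw [ENNReal.ofReal_add hT.le hI]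
  exact add_le_add hhead htail

end Ahlfors

open Ahlfors

theorem Is_one_two_sided_estimate_general {Z : Type*} [MetricSpace Z]
    [MeasurableSpace Z] [BorelSpace Z]
    (μ : Measure Z) [IsProbabilityMeasure μ] (δ c C u₀ : ℝ)
    (hδ : 0 < δ) (hc : 0 < c) (hcC : c ≤ C)
    (S : Set Z)
    (hlower : ∀ ξ ∈ S, ∀ u : ℝ, u₀ ≤ u →
      ENNReal.ofReal (c * Real.exp (-δ * u)) ≤ μ (closedBall ξ (Real.exp (-u))))
    (hupper : ∀ ξ ∈ S, ∀ u : ℝ, u₀ ≤ u →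
      μ (closedBall ξ (Real.exp (-u))) ≤ ENNReal.ofReal (C * Real.exp (-δ * u))) :
    ∀ s : ℝ, 1/2 < s → s ≤ 1 →
      ∃ c' C' : ℝ, 0 < c' ∧ c' ≤ C' ∧ ∀ ξ ∈ S,
        ENNReal.ofReal (c' / (2*s - 1))
          ≤ ∫⁻ η, ENNReal.ofReal ((dist ξ η) ^ (-(2*(1-s)*δ))) ∂μ ∧
        ∫⁻ η, ENNReal.ofReal ((dist ξ η) ^ (-(2*(1-s)*δ))) ∂μ
          ≤ ENNReal.ofReal (C' / (2*s - 1)) := by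
  intro s hs hs1
  set α := 2 * (1 - s) * δ
  have hα : 0 ≤ α := by positivity
  have hαδ : α < δ := by nlinarith
  have hε : 0 < 2 * s - 1 := by linarith
  set R := exp (-u₀)
  have hball := fun ξ (hξ : ξ ∈ S) ↦ measure_closedBall_le_rpow_of_exp (hupper ξ hξ)
  obtain ⟨K, hK⟩ : ∃ K : ℝ, ∀ ξ ∈ S,
      ∫⁻ η, ENNReal.ofReal (dist ξ η ^ (-α)) ∂μ ≤ ENNReal.ofReal K := by
    rcases hα.eq_or_lt with hα0 | hα0
    · exact ⟨1, fun ξ _ ↦ by simp [← hα0]⟩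
    · exact ⟨_, fun ξ hξ ↦ lintegral_dist_rpow_neg_le hα0 hαδ (exp_pos _)
        (hc.le.trans hcC) (hball ξ hξ)⟩
  set k := R ^ (-α) * (c * exp (-δ * u₀))
  refine ⟨(2 * s - 1) * k, (2 * s - 1) * max k K, by positivity,
    mul_le_mul_of_nonneg_left (le_max_left _ _) hε.le, fun ξ hξ ↦ ⟨?_, ?_⟩⟩ <;>
    rw [mul_div_cancel_left₀ _ hε.ne']
  · calc ENNReal.ofReal k = ENNReal.ofReal (R ^ (-α)) * ENNReal.ofReal (c * exp (-δ * u₀)) :=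
          ENNReal.ofReal_mul (by positivity)
      _ ≤ ENNReal.ofReal (R ^ (-α)) * μ (closedBall ξ R) := by
          gcongr
          exact hlower ξ hξ u₀ le_rfl
      _ ≤ _ := ofReal_rpow_neg_mul_measure_closedBall_le_lintegral hα
          (measure_singleton_eq_zero_of_measure_closedBall_le hδ (exp_pos _) (hball ξ hξ))
  · exact (hK ξ hξ).trans (ENNReal.ofReal_le_ofReal (le_max_right _ _))

theorem Is_one_two_sided_estimate {Z : Type*} [MetricSpace Z]
    [MeasurableSpace Z] [BorelSpace Z]
    (μ : Measure Z) [IsProbabilityMeasure μ] (δ c C u₀ : ℝ)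
    (hδ : 0 < δ) (hc : 0 < c) (hcC : c ≤ C) (hu₀ : 0 ≤ u₀)
    (S : Set Z)
    (hlower : ∀ ξ ∈ S, ∀ u : ℝ, u₀ ≤ u →
      ENNReal.ofReal (c * Real.exp (-δ * u)) ≤ μ (closedBall ξ (Real.exp (-u))))
    (hupper : ∀ ξ ∈ S, ∀ u : ℝ, u₀ ≤ u →
      μ (closedBall ξ (Real.exp (-u))) ≤ ENNReal.ofReal (C * Real.exp (-δ * u))) :
    ∀ s : ℝ, 1/2 < s → s ≤ 1 →
      ∃ c' C' : ℝ, 0 < c' ∧ c' ≤ C' ∧ ∀ ξ ∈ S,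
        ENNReal.ofReal (c' / (2*s - 1))
          ≤ ∫⁻ η, ENNReal.ofReal ((dist ξ η) ^ (-(2*(1-s)*δ))) ∂μ ∧
        ∫⁻ η, ENNReal.ofReal ((dist ξ η) ^ (-(2*(1-s)*δ))) ∂μ
          ≤ ENNReal.ofReal (C' / (2*s - 1)) :=
  Is_one_two_sided_estimate_general μ δ c C u₀ hδ hc hcC S hlower hupper
end
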